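/- Let k ≥ 1 and let k_1,…,k_n be positive integers with k_1 + ⋯ + k_n = 2k. Over candidates {A,B,C} ordered A < B < C, consider the weighted profile consisting of: one voter of weight 6k−1 with fixed vote B>C>A, one voter of weight 4k with fixed vote A>B>C, one voter of weight 4k with fixed vote C>B>A, and for each i ∈ {1,…,n} a voter of weight 2k_i whose vote may be chosen arbitrarily from the four votes single-peaked with respect to A < B < C (namely A>B>C, B>A>C, B>C>A, C>B>A). Then: (i) for every choice of these votes and every choice of a minimum-first-place-weight candidate to eliminate, the STV winner is B or C; and (ii) there exists a choice of these votes under which C is the STV winner if and only if there exists a subset S ⊆ {1,…,n} with Σ_{i∈S} k_i = k. -/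

import Mathlib

/-!
Write `a`, `b`, `c` for the free weight on the votes `A>B>C`, on `B>A>C` or `B>C>A`, and on
`C>B>A`; then `a + b + c = 2k` and the total weight is `18k - 1`. Candidate `A` has first-place
weight `4k + 2a ≤ 8k` and meets an opponent with at least `10k - 1` voters against it in either
runoff, so `A` never wins. `C` has no majority and cannot beat `B`, so `C` wins only after `B` is
eliminated; `B`, with first-place weight `6k - 1 + 2b`, is then minimal only if `b = 0` and
`a = c = k`, and the voters of `A>B>C` form the subset. Conversely, putting the subset on `A>B>C`
and everyone else on `C>B>A` leaves `B` last with `6k - 1` against `6k` and `6k`, and `C` beats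
`A` by `12k - 1` to `6k`.
-/

namespace Stmt7

inductive Cand where
  | A | B | C
deriving DecidableEq

open Cand

/-- `above l x y` : in the vote given by list `l` (best candidate first),
`x` is ranked above `y`. -/
def above (l : List Cand) (x y : Cand) : Prop := l.idxOf x < l.idxOf y

instance (l : List Cand) (x y : Cand) : Decidable (above l x y) :=
  inferInstanceAs (Decidable (_ < _))

/-- `first l x` : `x` is the top candidate of the vote `l`. -/
def first (l : List Cand) (x : Cand) : Prop := l.head? = some x

instance (l : List Cand) (x : Cand) : Decidable (first l x) :=
  inferInstanceAs (Decidable (_ = _))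

/-- Total weight of the profile. -/
def W (k : ℕ) {n : ℕ} (kk : Fin n → ℕ) : ℕ :=
  (6 * k - 1) + 4 * k + 4 * k + ∑ i, 2 * kk i

/-- Total weight of voters ranking `x` above `y`, where `f` gives the votes
of the free voters. -/
def N (k : ℕ) {n : ℕ} (kk : Fin n → ℕ) (f : Fin n → List Cand) (x y : Cand) : ℕ :=
  (if above [B, C, A] x y then 6 * k - 1 else 0)
  + (if above [A, B, C] x y then 4 * k else 0)
  + (if above [C, B, A] x y then 4 * k else 0)
  + ∑ i, (if above (f i) x y then 2 * kk i else 0)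

/-- First-place weight of candidate `x`. -/
def plur (k : ℕ) {n : ℕ} (kk : Fin n → ℕ) (f : Fin n → List Cand) (x : Cand) : ℕ :=
  (if first [B, C, A] x then 6 * k - 1 else 0)
  + (if first [A, B, C] x then 4 * k else 0)
  + (if first [C, B, A] x then 4 * k else 0)
  + ∑ i, (if first (f i) x then 2 * kk i else 0)

/-- `x` is the STV winner when candidate `e` is eliminated (for three
candidates): either `x` has a strict majority of first-place weight, or no
candidate has a majority, `x` survives the elimination of `e` and beats the
other surviving candidate in pairwise majority. -/
def IsSTVWinner (plur : Cand → ℕ) (N : Cand → Cand → ℕ) (W : ℕ) (e x : Cand) : Prop :=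
  (2 * plur x > W) ∨
  ((∀ y, ¬ 2 * plur y > W) ∧ x ≠ e ∧ ∀ y, y ≠ e → y ≠ x → N x y > N y x)

open Finset

def voteWeight {n : ℕ} (kk : Fin n → ℕ) (f : Fin n → List Cand) (v : List Cand) : ℕ :=
  ∑ i with f i = v, kk i

def singlePeakedVotes : List (List Cand) := [[A, B, C], [B, A, C], [B, C, A], [C, B, A]]

lemma sum_toFinset_singlePeakedVotes (g : List Cand → ℕ) :
    ∑ v ∈ singlePeakedVotes.toFinset, g v =
      g [A, B, C] + g [B, A, C] + g [B, C, A] + g [C, B, A] := by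
  simp [singlePeakedVotes, add_assoc]

section Tally

variable {n k : ℕ} {kk : Fin n → ℕ} {f : Fin n → List Cand}

lemma sum_ite_eq_sum_voteWeight {votes : List (List Cand)} (hf : ∀ i, f i ∈ votes)
    (P : List Cand → Prop) [DecidablePred P] (c : ℕ) :
    ∑ i, (if P (f i) then c * kk i else 0) =
      ∑ v ∈ votes.toFinset, if P v then c * voteWeight kk f v else 0 := by
  rw [← sum_fiberwise_of_maps_to (fun i _ => List.mem_toFinset.2 (hf i))]
  refine sum_congr rfl fun v _ => ?_
  rw [voteWeight, mul_sum]
  split_ifs with hP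
  · exact sum_congr rfl fun i hi => if_pos ((mem_filter.1 hi).2 ▸ hP)
  · exact sum_eq_zero fun i hi => if_neg ((mem_filter.1 hi).2 ▸ hP)

lemma voteWeight_add_add_add (hf : ∀ i, f i ∈ singlePeakedVotes) :
    voteWeight kk f [A, B, C] + voteWeight kk f [B, A, C] + voteWeight kk f [B, C, A] +
      voteWeight kk f [C, B, A] = ∑ i, kk i := by
  rw [← sum_fiberwise_of_maps_to (fun i _ => List.mem_toFinset.2 (hf i)) kk,
    sum_toFinset_singlePeakedVotes]
  rfl

lemma W_eq (hsum : ∑ i, kk i = 2 * k) : W k kk = 18 * k - 1 := by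
  rw [W, ← mul_sum, hsum]
  omega

lemma plur_A (hf : ∀ i, f i ∈ singlePeakedVotes) :
    plur k kk f A = 4 * k + 2 * voteWeight kk f [A, B, C] := by
  rw [plur, sum_ite_eq_sum_voteWeight hf (first · _), sum_toFinset_singlePeakedVotes]
  simp +decide only [if_true, if_false]
  omega

lemma plur_B (hf : ∀ i, f i ∈ singlePeakedVotes) :
    plur k kk f B =
      (6 * k - 1) + 2 * (voteWeight kk f [B, A, C] + voteWeight kk f [B, C, A]) := by
  rw [plur, sum_ite_eq_sum_voteWeight hf (first · _), sum_toFinset_singlePeakedVotes]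
  simp +decide only [if_true, if_false]
  omega

lemma plur_C (hf : ∀ i, f i ∈ singlePeakedVotes) :
    plur k kk f C = 4 * k + 2 * voteWeight kk f [C, B, A] := by
  rw [plur, sum_ite_eq_sum_voteWeight hf (first · _), sum_toFinset_singlePeakedVotes]
  simp +decide only [if_true, if_false]
  omega

lemma N_A_B (hf : ∀ i, f i ∈ singlePeakedVotes) :
    N k kk f A B = 4 * k + 2 * voteWeight kk f [A, B, C] := by
  rw [N, sum_ite_eq_sum_voteWeight hf (above · _ _),
    sum_toFinset_singlePeakedVotes]
  simp +decide only [if_true, if_false]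
  omega

lemma N_B_A (hf : ∀ i, f i ∈ singlePeakedVotes) :
    N k kk f B A = (6 * k - 1) + 4 * k + 2 * (voteWeight kk f [B, A, C] +
      voteWeight kk f [B, C, A] + voteWeight kk f [C, B, A]) := by
  rw [N, sum_ite_eq_sum_voteWeight hf (above · _ _),
    sum_toFinset_singlePeakedVotes]
  simp +decide only [if_true, if_false]
  omega

lemma N_A_C (hf : ∀ i, f i ∈ singlePeakedVotes) :
    N k kk f A C = 4 * k + 2 * (voteWeight kk f [A, B, C] + voteWeight kk f [B, A, C]) := by
  rw [N, sum_ite_eq_sum_voteWeight hf (above · _ _),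
    sum_toFinset_singlePeakedVotes]
  simp +decide only [if_true, if_false]
  omega

lemma N_C_A (hf : ∀ i, f i ∈ singlePeakedVotes) :
    N k kk f C A = (6 * k - 1) + 4 * k +
      2 * (voteWeight kk f [B, C, A] + voteWeight kk f [C, B, A]) := by
  rw [N, sum_ite_eq_sum_voteWeight hf (above · _ _),
    sum_toFinset_singlePeakedVotes]
  simp +decide only [if_true, if_false]
  omega

lemma N_B_C (hf : ∀ i, f i ∈ singlePeakedVotes) :
    N k kk f B C = (6 * k - 1) + 4 * k + 2 * (voteWeight kk f [A, B, C] +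
      voteWeight kk f [B, A, C] + voteWeight kk f [B, C, A]) := by
  rw [N, sum_ite_eq_sum_voteWeight hf (above · _ _),
    sum_toFinset_singlePeakedVotes]
  simp +decide only [if_true, if_false]
  omega

lemma N_C_B (hf : ∀ i, f i ∈ singlePeakedVotes) :
    N k kk f C B = 4 * k + 2 * voteWeight kk f [C, B, A] := by
  rw [N, sum_ite_eq_sum_voteWeight hf (above · _ _),
    sum_toFinset_singlePeakedVotes]
  simp +decide only [if_true, if_false]
  omega

end Tally

section Elicitation

variable {n k : ℕ} {kk : Fin n → ℕ} {f : Fin n → List Cand}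

lemma not_isSTVWinner_A (hf : ∀ i, f i ∈ singlePeakedVotes) (hsum : ∑ i, kk i = 2 * k)
    (e : Cand) : ¬ IsSTVWinner (plur k kk f) (N k kk f) (W k kk) e A := by
  have hw := voteWeight_add_add_add (kk := kk) hf
  rintro (hmaj | ⟨-, hAe, hbeats⟩)
  · rw [plur_A hf, W_eq hsum] at hmaj
    omega
  · cases e with
    | A => exact hAe rfl
    | B =>
      have hAC := hbeats C (by decide) (by decide)
      rw [N_A_C hf, N_C_A hf] at hAC
      omega
    | C =>
      have hAB := hbeats B (by decide) (by decide)
      rw [N_A_B hf, N_B_A hf] at hAB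
      omega

lemma voteWeight_ABC_eq_of_isSTVWinner_C (hf : ∀ i, f i ∈ singlePeakedVotes)
    (hsum : ∑ i, kk i = 2 * k) {e : Cand} (hmin : ∀ y, plur k kk f e ≤ plur k kk f y)
    (hwin : IsSTVWinner (plur k kk f) (N k kk f) (W k kk) e C) :
    voteWeight kk f [A, B, C] = k := by
  have hw := voteWeight_add_add_add (kk := kk) hf
  rcases hwin with hmaj | ⟨-, hCe, hbeats⟩
  · rw [plur_C hf, W_eq hsum] at hmaj
    omega
  · cases e with
    | A =>
      have hCB := hbeats B (by decide) (by decide)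
      rw [N_C_B hf, N_B_C hf] at hCB
      omega
    | B =>
      have hBA := hmin A
      have hBC := hmin C
      rw [plur_A hf, plur_B hf] at hBA
      rw [plur_C hf, plur_B hf] at hBC
      omega
    | C => exact absurd rfl hCe

lemma isSTVWinner_C_of_voteWeight (hk : 1 ≤ k) (hf : ∀ i, f i ∈ singlePeakedVotes)
    (hsum : ∑ i, kk i = 2 * k) (hABC : voteWeight kk f [A, B, C] = k)
    (hBAC : voteWeight kk f [B, A, C] = 0) (hBCA : voteWeight kk f [B, C, A] = 0) :
    (∀ y, plur k kk f B ≤ plur k kk f y) ∧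
      IsSTVWinner (plur k kk f) (N k kk f) (W k kk) B C := by
  have hw := voteWeight_add_add_add (kk := kk) hf
  rw [hABC, hBAC, hBCA, hsum] at hw
  refine ⟨fun y => ?_, Or.inr ⟨fun y => ?_, by decide, fun y hyB hyC => ?_⟩⟩
  · cases y <;> simp only [plur_A hf, plur_B hf, plur_C hf] <;> omega
  · cases y <;> simp only [plur_A hf, plur_B hf, plur_C hf, W_eq hsum] <;> omega
  · cases y with
    | A =>
      rw [N_C_A hf, N_A_C hf]
      omega
    | B => exact absurd rfl hyB
    | C => exact absurd rfl hyC

def splitVotes (S : Finset (Fin n)) (i : Fin n) : List Cand :=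
  if i ∈ S then [A, B, C] else [C, B, A]

lemma splitVotes_mem (S : Finset (Fin n)) (i : Fin n) : splitVotes S i ∈ singlePeakedVotes := by
  unfold splitVotes
  split_ifs <;> simp [singlePeakedVotes]

lemma voteWeight_splitVotes_ABC (S : Finset (Fin n)) :
    voteWeight kk (splitVotes S) [A, B, C] = ∑ i ∈ S, kk i := by
  simp [voteWeight, splitVotes]

lemma voteWeight_splitVotes_eq_zero (S : Finset (Fin n)) {v : List Cand}
    (hABC : v ≠ [A, B, C]) (hCBA : v ≠ [C, B, A]) : voteWeight kk (splitVotes S) v = 0 := by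
  refine sum_eq_zero fun i hi => absurd (mem_filter.1 hi).2 ?_
  unfold splitVotes
  split_ifs <;> exact Ne.symm ‹_›

end Elicitation

theorem stv_single_peaked_elicitation_general
    (k n : ℕ) (hk : 1 ≤ k) (kk : Fin n → ℕ)
    (hsum : ∑ i, kk i = 2 * k) :
    ((∀ f : Fin n → List Cand,
        (∀ i, f i ∈ [[A, B, C], [B, A, C], [B, C, A], [C, B, A]]) →
        ∀ e : Cand, (∀ y, plur k kk f e ≤ plur k kk f y) →
        ∀ x : Cand, IsSTVWinner (plur k kk f) (N k kk f) (W k kk) e x →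
          x = B ∨ x = C)
      ∧
      ((∃ f : Fin n → List Cand, ∃ e : Cand,
          (∀ i, f i ∈ [[A, B, C], [B, A, C], [B, C, A], [C, B, A]]) ∧
          (∀ y, plur k kk f e ≤ plur k kk f y) ∧
          IsSTVWinner (plur k kk f) (N k kk f) (W k kk) e C)
        ↔ ∃ S : Finset (Fin n), ∑ i ∈ S, kk i = k)) := by
  refine ⟨fun f hf e _ x hx => ?_, ⟨?_, ?_⟩⟩
  · cases x with
    | A => exact absurd hx (not_isSTVWinner_A hf hsum e)
    | B => exact Or.inl rfl
    | C => exact Or.inr rfl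
  · rintro ⟨f, e, hf, hmin, hwin⟩
    exact ⟨univ.filter (f · = [A, B, C]), voteWeight_ABC_eq_of_isSTVWinner_C hf hsum hmin hwin⟩
  · rintro ⟨S, hS⟩
    refine ⟨splitVotes S, B, splitVotes_mem S, ?_⟩
    exact isSTVWinner_C_of_voteWeight hk (splitVotes_mem S) hsum
      ((voteWeight_splitVotes_ABC S).trans hS)
      (voteWeight_splitVotes_eq_zero S (by decide) (by decide))
      (voteWeight_splitVotes_eq_zero S (by decide) (by decide))

theorem stv_single_peaked_elicitation
    (k n : ℕ) (hk : 1 ≤ k) (kk : Fin n → ℕ) (hpos : ∀ i, 1 ≤ kk i)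
    (hsum : ∑ i, kk i = 2 * k) :
    ((∀ f : Fin n → List Cand,
        (∀ i, f i ∈ [[A, B, C], [B, A, C], [B, C, A], [C, B, A]]) →
        ∀ e : Cand, (∀ y, plur k kk f e ≤ plur k kk f y) →
        ∀ x : Cand, IsSTVWinner (plur k kk f) (N k kk f) (W k kk) e x →
          x = B ∨ x = C)
      ∧
      ((∃ f : Fin n → List Cand, ∃ e : Cand,
          (∀ i, f i ∈ [[A, B, C], [B, A, C], [B, C, A], [C, B, A]]) ∧
          (∀ y, plur k kk f e ≤ plur k kk f y) ∧
          IsSTVWinner (plur k kk f) (N k kk f) (W k kk) e C)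
        ↔ ∃ S : Finset (Fin n), ∑ i ∈ S, kk i = k)) :=
  stv_single_peaked_elicitation_general k n hk kk hsum

end Stmt7
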